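/- For every natural number n and language L ⊆ Σ*: perm(L^{n+1}) = perm(L^{⧢,n} ⧢ L), where L^{n+1} is the (n+1)-fold concatenation power and L^{⧢,n} the n-fold shuffle power. -/
import Mathlib


variable {α : Type*}

/-- `IsShuffle u v w` means `w` is an interleaving of `u` and `v`. -/
inductive IsShuffle : List α → List α → List α → Prop
  | nil : IsShuffle [] [] []
  | left {u v w : List α} (a : α) : IsShuffle u v w → IsShuffle (a :: u) v (a :: w)
  | right {u v w : List α} (b : α) : IsShuffle u v w → IsShuffle u (b :: v) (b :: w)

/-- The shuffle `u ⧢ v` of two words, as a set of words. -/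
def wordShuffle (u v : List α) : Set (List α) := {w | IsShuffle u v w}

/-- The shuffle of two languages. -/
def lshuffle (L₁ L₂ : Set (List α)) : Set (List α) :=
  {w | ∃ u ∈ L₁, ∃ v ∈ L₂, IsShuffle u v w}

/-- n-fold shuffle power. -/
def shufflePow (L : Set (List α)) : ℕ → Set (List α)
  | 0 => {[]}
  | n + 1 => lshuffle (shufflePow L n) L

/-- Iterated shuffle `L^{⧢,*}`. -/
def shuffleStar (L : Set (List α)) : Set (List α) := ⋃ n, shufflePow L n

/-- The set of permutations of a word. -/
def permW (w : List α) : Set (List α) := {v | v.Perm w}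

/-- Permutation closure of a language. -/
def permL (L : Set (List α)) : Set (List α) := {v | ∃ w ∈ L, v.Perm w}

/-- Concatenation of languages. -/
def catL (L₁ L₂ : Set (List α)) : Set (List α) := {w | ∃ u ∈ L₁, ∃ v ∈ L₂, w = u ++ v}

/-- n-fold concatenation power. -/
def catPow (L : Set (List α)) : ℕ → Set (List α)
  | 0 => {[]}
  | n + 1 => catL (catPow L n) L

/-- Kleene star. -/
def kstar (L : Set (List α)) : Set (List α) := ⋃ n, catPow L n

/-- Parikh mapping: counts occurrences of each letter. -/
def parikh [DecidableEq α] (w : List α) : α → ℕ := fun a => w.count a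

lemma IsShuffle.perm {u v w : List α} (h : IsShuffle u v w) : w.Perm (u ++ v) := by
  induction h with
  | nil => simp
  | left a _ ih => simpa using ih.cons a
  | right b h ih =>
      exact (ih.cons b).trans (List.Perm.symm (List.perm_middle))

lemma isShuffle_append (u v : List α) : IsShuffle u v (u ++ v) := by
  induction u with
  | nil =>
      induction v with
      | nil => exact IsShuffle.nil
      | cons b v ih => exact IsShuffle.right b ih
  | cons a u ih => exact IsShuffle.left a ih

lemma permL_catPow_shufflePow (n : ℕ) (L : Set (List α)) :
    permL (catPow L n) = permL (shufflePow L n) := by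
  induction n with
  | zero => rfl
  | succ n ih =>
      ext x
      constructor
      · rintro ⟨w, ⟨u, hu, v, hv, rfl⟩, hp⟩
        have hu' : u ∈ permL (shufflePow L n) := ih ▸ ⟨u, hu, List.Perm.refl u⟩
        obtain ⟨u', hu', hpu⟩ := hu'
        refine ⟨u' ++ v, ⟨u', hu', v, hv, isShuffle_append u' v⟩, ?_⟩
        exact hp.trans (hpu.append_right v)
      · rintro ⟨w, ⟨u, hu, v, hv, hs⟩, hp⟩
        have hu' : u ∈ permL (catPow L n) := ih ▸ ⟨u, hu, List.Perm.refl u⟩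
        obtain ⟨u', hu', hpu⟩ := hu'
        refine ⟨u' ++ v, ⟨u', hu', v, hv, rfl⟩, ?_⟩
        exact hp.trans (hs.perm.trans (hpu.append_right v))

theorem stmt17 (n : ℕ) (L : Set (List α)) :
    permL (catPow L (n + 1)) = permL (lshuffle (shufflePow L n) L) := by
  simpa [shufflePow] using permL_catPow_shufflePow (n + 1) L
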